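/- arXiv:0909.0408 — 4 statements merged into one kernel-verified Lean document; each statement's English description precedes it below -/
import Mathlib

section
/- If two pairs (X₁,Y₁) and (X₂,Y₂) of real 2n×2n matrices both satisfy the complete-positivity condition Y ≥ i(σ − XσXᵀ) (as complex Hermitian matrices), then their product (X₁X₂, Y₁ + X₁Y₂X₁ᵀ) also satisfies it. -/
open Matrix Complex
open scoped ComplexOrder

noncomputable section

/-- Index set for `2n × 2n` matrices, grouped as `n` pairs of modes. -/
abbrev Idx (n : ℕ) := Fin n × Fin 2

abbrev Mat (n : ℕ) := Matrix (Idx n) (Idx n) ℝ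

/-- The elementary symplectic form `[[0,1],[-1,0]]`. -/
def sigma1 : Matrix (Fin 2) (Fin 2) ℝ := !![0, 1; -1, 0]

/-- The standard symplectic form: block-diagonal with `n` copies of `sigma1`. -/
def symp (n : ℕ) : Mat n :=
  Matrix.kroneckerMap (· * ·) (1 : Matrix (Fin n) (Fin n) ℝ) sigma1

/-- Complexification of a real matrix. -/
def toC {m : Type*} (M : Matrix m m ℝ) : Matrix m m ℂ := M.map Complex.ofReal

/-- The complete positivity condition `Y ≥ i (σ - X σ Xᵀ)` for a Gaussian channel `(X, Y)`. -/
def IsGaussian {n : ℕ} (X Y : Mat n) : Prop :=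
  (toC Y - Complex.I • toC (symp n - X * symp n * Xᵀ)).PosSemidef

/-- The semigroup product of Gaussian channels. -/
def gProd {n : ℕ} (p q : Mat n × Mat n) : Mat n × Mat n :=
  (p.1 * q.1, p.2 + p.1 * q.2 * p.1ᵀ)

lemma toC_mul {m : Type*} [Fintype m] (A B : Matrix m m ℝ) :
    toC (A * B) = toC A * toC B := by
  ext i j
  simp [toC, Matrix.mul_apply]

lemma toC_sub {m : Type*} (A B : Matrix m m ℝ) : toC (A - B) = toC A - toC B := by
  simp [toC, Matrix.map_sub]

lemma toC_add {m : Type*} (A B : Matrix m m ℝ) : toC (A + B) = toC A + toC B := by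
  simp [toC, Matrix.map_add]

lemma toC_conjTranspose {m : Type*} (A : Matrix m m ℝ) : (toC A)ᴴ = toC Aᵀ := by
  ext i j
  simp [toC, Matrix.conjTranspose_apply, Complex.conj_ofReal]

theorem isGaussian_gProd (n : ℕ) (X₁ Y₁ X₂ Y₂ : Mat n)
    (h₁ : IsGaussian X₁ Y₁) (h₂ : IsGaussian X₂ Y₂) :
    IsGaussian (X₁ * X₂) (Y₁ + X₁ * Y₂ * X₁ᵀ) := by
  unfold IsGaussian at *
  have key : toC (Y₁ + X₁ * Y₂ * X₁ᵀ) -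
      Complex.I • toC (symp n - (X₁ * X₂) * symp n * (X₁ * X₂)ᵀ) =
      (toC Y₁ - Complex.I • toC (symp n - X₁ * symp n * X₁ᵀ)) +
      toC X₁ * (toC Y₂ - Complex.I • toC (symp n - X₂ * symp n * X₂ᵀ)) * (toC X₁)ᴴ := by
    rw [toC_conjTranspose]
    simp only [toC_add, toC_sub, toC_mul, Matrix.transpose_mul, Matrix.mul_sub,
      Matrix.sub_mul, smul_sub, Matrix.mul_smul, Matrix.smul_mul,
      mul_smul_comm, smul_mul_assoc, Matrix.mul_assoc]
    module
  rw [key]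
  exact h₁.add (h₂.mul_mul_conjTranspose_same (toC X₁))
end
end

section
/- The map π sending a Gaussian channel (X,Y) to the block matrix [[X⊗X, y, 0],[0, 1, 0],[0, 0, X]], where y is the column vectorization of Y, is an injective semigroup homomorphism from the semigroup of Gaussian channels (with product (X₁,Y₁)·(X₂,Y₂) = (X₁X₂, Y₁ + X₁Y₂X₁ᵀ)) into the multiplicative semigroup of real (4n²+2n+1)×(4n²+2n+1) matrices. -/
open Matrix Complex
open scoped ComplexOrder

noncomputable section

/-- The representation of a Gaussian channel `(X, Y)` as the block matrix
`[[X ⊗ X, vec Y, 0], [0, 1, 0], [0, 0, X]]` of size `4n² + 2n + 1`. -/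
def piRep {n : ℕ} (X Y : Mat n) :
    Matrix ((Idx n × Idx n) ⊕ (Unit ⊕ Idx n)) ((Idx n × Idx n) ⊕ (Unit ⊕ Idx n)) ℝ :=
  Matrix.of fun a b =>
    match a, b with
    | Sum.inl (i, j), Sum.inl (k, l) => X i k * X j l
    | Sum.inl (i, j), Sum.inr (Sum.inl _) => Y i j
    | Sum.inr (Sum.inl _), Sum.inr (Sum.inl _) => 1
    | Sum.inr (Sum.inr i), Sum.inr (Sum.inr j) => X i j
    | _, _ => 0

theorem piRep_injective_hom (n : ℕ) :
    Function.Injective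
      (fun p : {p : Mat n × Mat n // IsGaussian p.1 p.2} => piRep p.1.1 p.1.2) ∧
    ∀ p q : {p : Mat n × Mat n // IsGaussian p.1 p.2},
      piRep (gProd p.1 q.1).1 (gProd p.1 q.1).2 = piRep p.1.1 p.1.2 * piRep q.1.1 q.1.2 := by
  constructor
  · intro p q h
    simp only at h
    have hX : p.1.1 = q.1.1 := by
      ext i j
      have := congrFun (congrFun h (Sum.inr (Sum.inr i))) (Sum.inr (Sum.inr j))
      simpa [piRep] using this
    have hY : p.1.2 = q.1.2 := by
      ext i j
      have := congrFun (congrFun h (Sum.inl (i, j))) (Sum.inr (Sum.inl ()))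
      simpa [piRep] using this
    exact Subtype.ext (Prod.ext hX hY)
  · intro p q
    obtain ⟨⟨X₁, Y₁⟩, _⟩ := p
    obtain ⟨⟨X₂, Y₂⟩, _⟩ := q
    ext a b
    rcases a with ⟨i, j⟩ | u | i <;> rcases b with ⟨k, l⟩ | v | m <;>
      simp only [piRep, gProd, Matrix.of_apply, Matrix.mul_apply, Fintype.sum_sum_type,
        Matrix.add_apply, Matrix.transpose_apply,
        Finset.sum_const_zero, mul_zero, zero_mul, mul_one, one_mul, add_zero, zero_add,
        Finset.univ_unique, Finset.sum_singleton]
    · rw [show (Finset.univ : Finset (Idx n × Idx n)) = Finset.univ ×ˢ Finset.univ from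
        Finset.univ_product_univ.symm, Finset.sum_product, Finset.sum_mul_sum]
      exact Finset.sum_congr rfl fun p _ => Finset.sum_congr rfl fun q _ => by ring
    · rw [show (Finset.univ : Finset (Idx n × Idx n)) = Finset.univ ×ˢ Finset.univ from
        Finset.univ_product_univ.symm, Finset.sum_product, add_comm]
      congr 1
      rw [Finset.sum_comm]
      exact Finset.sum_congr rfl fun p _ => by
        rw [Finset.sum_mul]
        exact Finset.sum_congr rfl fun q _ => by ring
end
end

section
/- A one-parameter semigroup of Gaussian channels (X_t,Y_t)_{t≥0} has bounded noise term (i.e., sup_t ‖Y_t‖ < ∞) if and only if there exists a positive semidefinite real matrix 𝒴 such that Y_t = 𝒴 − X_t𝒴X_tᵀ for all t ≥ 0. -/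
open Matrix Complex
open scoped ComplexOrder

noncomputable section

open scoped Matrix.Norms.L2Operator

/-!
The real part of the complete-positivity condition makes every `Y t` positive semidefinite, so
the cocycle identity `Y t = Y s + X s * Y (t - s) * (X s)ᵀ` shows that `t ↦ Y t` is increasing
in the Loewner order. A bounded increasing family of symmetric matrices converges (its quadratic
forms do, and polarization recovers the entries) to some `𝒴 ≥ 0`; letting `s → ∞` in
`Y (t + s) = Y t + X t * Y s * (X t)ᵀ` gives `Y t = 𝒴 - X t * 𝒴 * (X t)ᵀ`.
Conversely, that identity gives `0 ≤ Y t ≤ 𝒴`, hence `‖Y t‖ ≤ ‖𝒴‖`.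
-/

open Filter Topology Set
open scoped MatrixOrder

namespace Matrix

variable {m 𝕜 : Type*} [Fintype m] [RCLike 𝕜]

theorem PosSemidef.map_re {M : Matrix m m 𝕜} (hM : M.PosSemidef) :
    (M.map RCLike.re).PosSemidef := by
  refine .of_dotProduct_mulVec_nonneg ?_ fun x => ?_
  · ext i j
    simpa using congrArg RCLike.re (hM.isHermitian.apply i j)
  · have h := RCLike.nonneg_iff.mp (hM.dotProduct_mulVec_nonneg (fun i => (x i : 𝕜)))
    simpa [dotProduct, mulVec, Finset.mul_sum, map_sum, mul_assoc, mul_left_comm] using h.1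

theorem isClosed_setOf_posSemidef : IsClosed {M : Matrix m m 𝕜 | M.PosSemidef} := by
  simp only [posSemidef_iff_dotProduct_mulVec, ofPred_and, ofPred_forall]
  refine .inter (isClosed_eq (by fun_prop) continuous_id) (isClosed_iInter fun x => ?_)
  exact isClosed_le continuous_const (by fun_prop)

variable [DecidableEq m]

theorem l2_opNorm_le_of_nonneg_of_le {A B : Matrix m m 𝕜} (hA : 0 ≤ A) (hAB : A ≤ B) :
    ‖A‖ ≤ ‖B‖ := by
  have hpos {C : Matrix m m 𝕜} (hC : 0 ≤ C) :
      (toEuclideanCLM (n := m) (𝕜 := 𝕜) C).IsPositive :=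
    (isPositive_toEuclideanLin_iff.mpr hC.posSemidef :)
  rw [← l2_opNorm_toEuclideanCLM A,
    ContinuousLinearMap.norm_eq_iSup_rayleighQuotient _ (hpos hA).isSymmetric]
  refine ciSup_le fun x => ?_
  have hA_x := (hpos hA).re_inner_nonneg_left x
  have hBA_x := (hpos (sub_nonneg.mpr hAB)).re_inner_nonneg_left x
  rw [map_sub, _root_.sub_apply, inner_sub_left, map_sub, sub_nonneg] at hBA_x
  calc |_| = _ := abs_of_nonneg (div_nonneg hA_x (sq_nonneg _))
    _ ≤ (toEuclideanCLM (n := m) (𝕜 := 𝕜) B).rayleighQuotient x :=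
      div_le_div_of_nonneg_right hBA_x (sq_nonneg _)
    _ ≤ ‖B‖ := (le_abs_self _).trans (ContinuousLinearMap.rayleighQuotient_le_norm _ x)

theorem dotProduct_mulVec_le_l2_opNorm_mul_sq (A : Matrix m m ℝ) (v : m → ℝ) :
    v ⬝ᵥ A *ᵥ v ≤ ‖A‖ * ‖WithLp.toLp 2 v‖ ^ 2 := by
  rw [← inner_toEuclideanCLM A (WithLp.toLp 2 v) (WithLp.toLp 2 v)]
  calc _ ≤ ‖WithLp.toLp 2 v‖ * ‖toEuclideanCLM (n := m) (𝕜 := ℝ) A (WithLp.toLp 2 v)‖ :=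
        real_inner_le_norm _ _
    _ ≤ ‖WithLp.toLp 2 v‖ * (‖A‖ * ‖WithLp.toLp 2 v‖) := by
        gcongr
        exact ContinuousLinearMap.le_opNorm _ _
    _ = _ := by ring

theorem IsHermitian.apply_eq_polarization {M : Matrix m m ℝ} (hM : M.IsHermitian) (i j : m) :
    M i j = ((Pi.single i 1 + Pi.single j 1) ⬝ᵥ M *ᵥ (Pi.single i 1 + Pi.single j 1)
      - Pi.single i 1 ⬝ᵥ M *ᵥ Pi.single i 1 - Pi.single j 1 ⬝ᵥ M *ᵥ Pi.single j 1) / 2 := by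
  have hji : M j i = M i j := by simpa using hM.apply i j
  simp only [mulVec_add, mulVec_single, MulOpposite.op_one, one_smul, dotProduct_add,
    add_dotProduct, single_dotProduct, col_apply, one_mul, hji]
  ring

theorem tendsto_atTop_of_monotone_of_bddAbove_norm {ι : Type*} [Preorder ι]
    {Z : ι → Matrix m m ℝ} (hZ : ∀ i, (Z i).IsHermitian) (hmono : Monotone Z)
    (hbdd : BddAbove (range fun i => ‖Z i‖)) : ∃ L, Tendsto Z atTop (𝓝 L) := by
  obtain ⟨c, hc⟩ := hbdd
  set Q : (m → ℝ) → ℝ := fun v => ⨆ i, v ⬝ᵥ Z i *ᵥ v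
  have hQ (v : m → ℝ) : Tendsto (fun i => v ⬝ᵥ Z i *ᵥ v) atTop (𝓝 (Q v)) := by
    refine tendsto_atTop_ciSup (fun i j hij => ?_) ⟨c * ‖WithLp.toLp 2 v‖ ^ 2, ?_⟩
    · simpa [sub_mulVec, dotProduct_sub] using (le_iff.mp (hmono hij)).dotProduct_mulVec_nonneg v
    · rintro _ ⟨i, rfl⟩
      exact (dotProduct_mulVec_le_l2_opNorm_mul_sq _ v).trans (by gcongr; exact hc ⟨i, rfl⟩)
  refine ⟨of fun k l => (Q (Pi.single k 1 + Pi.single l 1) - Q (Pi.single k 1)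
    - Q (Pi.single l 1)) / 2, tendsto_pi_nhds.2 fun k => tendsto_pi_nhds.2 fun l => ?_⟩
  simp_rw [(hZ _).apply_eq_polarization k l]
  exact (((hQ _).sub (hQ _)).sub (hQ _)).div_const 2

end Matrix

open Matrix

section Cocycle

variable {m : Type*} [Fintype m] {X Y : ℝ → Matrix m m ℝ}

theorem monotoneOn_of_cocycle
    (hY : ∀ t s, 0 ≤ t → 0 ≤ s → Y (t + s) = Y t + X t * Y s * (X t)ᵀ)
    (hpsd : ∀ t, 0 ≤ t → (Y t).PosSemidef) : MonotoneOn Y (Ici 0) := by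
  intro s hs t _ hst
  rw [le_iff, ← add_sub_cancel s t, hY s (t - s) hs (sub_nonneg.mpr hst), add_sub_cancel_left]
  simpa using (hpsd _ (sub_nonneg.mpr hst)).mul_mul_conjTranspose_same (X s)

theorem eq_sub_of_tendsto_of_cocycle
    (hY : ∀ t s, 0 ≤ t → 0 ≤ s → Y (t + s) = Y t + X t * Y s * (X t)ᵀ)
    {L : Matrix m m ℝ} (hL : Tendsto Y atTop (𝓝 L)) {t : ℝ} (ht : 0 ≤ t) :
    Y t = L - X t * L * (X t)ᵀ := by
  have h_shift : Tendsto (fun s => Y (t + s)) atTop (𝓝 L) :=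
    hL.comp (tendsto_atTop_add_const_left _ t tendsto_id)
  have h_cocycle : Tendsto (fun s => Y (t + s)) atTop (𝓝 (Y t + X t * L * (X t)ᵀ)) :=
    (tendsto_const_nhds.add ((tendsto_const_nhds.mul hL).mul tendsto_const_nhds)).congr'
      ((eventually_ge_atTop 0).mono fun s hs => (hY t s ht hs).symm)
  exact eq_sub_of_add_eq (tendsto_nhds_unique h_cocycle h_shift)

end Cocycle

theorem IsGaussian.posSemidef_noise {n : ℕ} {X Y : Mat n} (h : IsGaussian X Y) :
    Y.PosSemidef := by
  convert h.map_re
  ext i j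
  simp [toC]

theorem bounded_noise_iff_simple_form_general (n : ℕ) (X Y : ℝ → Mat n)
    (hsg : ∀ t s : ℝ, 0 ≤ t → 0 ≤ s →
      X t * X s = X (t + s) ∧ Y (t + s) = Y t + X t * Y s * (X t)ᵀ)
    (hG : ∀ t : ℝ, 0 ≤ t → IsGaussian (X t) (Y t)) :
    (∃ c : ℝ, ∀ t : ℝ, 0 ≤ t → ‖Y t‖ ≤ c) ↔
      ∃ Ycal : Mat n, Ycal.PosSemidef ∧
        ∀ t : ℝ, 0 ≤ t → Y t = Ycal - X t * Ycal * (X t)ᵀ := by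
  have hY : ∀ t s, 0 ≤ t → 0 ≤ s → Y (t + s) = Y t + X t * Y s * (X t)ᵀ :=
    fun t s ht hs => (hsg t s ht hs).2
  have hpsd : ∀ t, 0 ≤ t → (Y t).PosSemidef := fun t ht => (hG t ht).posSemidef_noise
  constructor
  · rintro ⟨c, hc⟩
    obtain ⟨L, hL⟩ := tendsto_atTop_of_monotone_of_bddAbove_norm
      (Z := fun s : Ici (0 : ℝ) => Y s) (fun s => (hpsd s s.2).isHermitian)
      (monotoneOn_iff_monotone.mp (monotoneOn_of_cocycle hY hpsd))
      ⟨c, by rintro _ ⟨s, rfl⟩; exact hc s s.2⟩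
    rw [tendsto_comp_val_Ici_atTop] at hL
    exact ⟨L, isClosed_setOf_posSemidef.mem_of_tendsto hL ((eventually_ge_atTop 0).mono hpsd),
      fun t ht => eq_sub_of_tendsto_of_cocycle hY hL ht⟩
  · rintro ⟨L, hL, hYL⟩
    refine ⟨‖L‖, fun t ht => l2_opNorm_le_of_nonneg_of_le (hpsd t ht).nonneg ?_⟩
    rw [le_iff, hYL t ht, sub_sub_cancel]
    simpa using hL.mul_mul_conjTranspose_same (X t)

theorem bounded_noise_iff_simple_form (n : ℕ) (X Y : ℝ → Mat n)
    (hXc : Continuous X) (hYc : Continuous Y)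
    (hX0 : X 0 = 1) (hY0 : Y 0 = 0)
    (hsg : ∀ t s : ℝ, 0 ≤ t → 0 ≤ s →
      X t * X s = X (t + s) ∧ Y (t + s) = Y t + X t * Y s * (X t)ᵀ)
    (hG : ∀ t : ℝ, 0 ≤ t → IsGaussian (X t) (Y t)) :
    (∃ c : ℝ, ∀ t : ℝ, 0 ≤ t → ‖Y t‖ ≤ c) ↔
      ∃ Ycal : Mat n, Ycal.PosSemidef ∧
        ∀ t : ℝ, 0 ≤ t → Y t = Ycal - X t * Ycal * (X t)ᵀ :=
  bounded_noise_iff_simple_form_general n X Y hsg hG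
end
end

section
/- For every complex positive semidefinite 2n×2n matrix P there exists a Gaussian channel (X,Y) with i(XσXᵀ − σ) + Y = P; moreover p(X,Y) := i(XσXᵀ − σ) + Y is positive semidefinite if and only if (X,Y) satisfies the CP condition, and p(X,Y) = 0 if and only if X is symplectic and Y = 0. -/
open Matrix Complex
open scoped ComplexOrder

noncomputable section

/-- The map from Gaussian channels to complex positive matrices. -/
def pMap {n : ℕ} (X Y : Mat n) : Matrix (Idx n) (Idx n) ℂ :=
  Complex.I • toC (X * symp n * Xᵀ - symp n) + toC Y


/-!
Write `P = Y + i A` with `Y`, `A` real; hermiticity of `P` makes `A` antisymmetric, and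
`pMap X Y = P` amounts to `X σ Xᵀ = A + σ`. Every real antisymmetric `2n × 2n` matrix `B` has the
form `X σ Xᵀ = ∑ₗ (aₗ bₗᵀ - bₗ aₗᵀ)`: pivoting on an entry `B p q ≠ 0` splits off one such term
and leaves an antisymmetric matrix whose rows and columns `p`, `q` vanish, so `n` pivots exhaust
all `2n` indices. The other two assertions are bookkeeping: `pMap X Y` is the matrix of the CP
condition, and it vanishes iff its real and imaginary parts do.
-/

section SkewDecomposition

variable {K m : Type*} [Field K] {B : Matrix m m K}

lemma apply_swap_eq_neg_of_transpose_eq_neg (hB : Bᵀ = -B) (i j : m) : B j i = -B i j :=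
  congrFun (congrFun hB i) j

lemma diag_eq_zero_of_transpose_eq_neg (hK : ringChar K ≠ 2) (hB : Bᵀ = -B) (i : m) :
    B i i = 0 :=
  (Ring.eq_self_iff_eq_zero_of_char_ne_two hK).mp
    (apply_swap_eq_neg_of_transpose_eq_neg hB i i).symm

def skewPivot (B : Matrix m m K) (p q : m) : Matrix m m K :=
  of fun i j => B i j - (B i p * B j q - B i q * B j p) / B p q

variable {p q : m}

lemma skewPivot_transpose (hB : Bᵀ = -B) : (skewPivot B p q)ᵀ = -skewPivot B p q := by
  ext i j
  simp only [skewPivot, transpose_apply, Matrix.neg_apply, of_apply,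
    apply_swap_eq_neg_of_transpose_eq_neg hB i j]
  ring

lemma skewPivot_apply_left (hK : ringChar K ≠ 2) (hB : Bᵀ = -B) (hpq : B p q ≠ 0) (i : m) :
    skewPivot B p q i p = 0 := by
  simp only [skewPivot, of_apply, diag_eq_zero_of_transpose_eq_neg hK hB p]
  field_simp
  ring

lemma skewPivot_apply_right (hK : ringChar K ≠ 2) (hB : Bᵀ = -B) (hpq : B p q ≠ 0) (i : m) :
    skewPivot B p q i q = 0 := by
  simp only [skewPivot, of_apply, diag_eq_zero_of_transpose_eq_neg hK hB q,
    apply_swap_eq_neg_of_transpose_eq_neg hB p q]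
  field_simp
  ring

lemma skewPivot_apply_of_forall_apply_eq_zero (hB : Bᵀ = -B) {j : m} (hj : ∀ i, B i j = 0)
    (i : m) : skewPivot B p q i j = 0 := by
  have hrow (l : m) : B j l = 0 := by
    rw [apply_swap_eq_neg_of_transpose_eq_neg hB l j, hj, neg_zero]
  simp [skewPivot, hj, hrow]

lemma eq_skewPivot_add (hpq : B p q ≠ 0) (i j : m) :
    B i j = skewPivot B p q i j + (B i p / B p q * B j q - B i q * (B j p / B p q)) := by
  simp only [skewPivot, of_apply]
  field_simp
  ring

theorem exists_eq_sum_of_transpose_eq_neg (hK : ringChar K ≠ 2) [DecidableEq m] :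
    ∀ (k : ℕ) (S : Finset m) (B : Matrix m m K), Bᵀ = -B → (∀ j ∉ S, ∀ i, B i j = 0) →
      S.card ≤ 2 * k → ∃ a b : Fin k → m → K, ∀ i j, B i j = ∑ l, (a l i * b l j - b l i * a l j)
  | 0, S, B, _, hS, hcard => by
    rw [Nat.mul_zero, Nat.le_zero, Finset.card_eq_zero] at hcard
    exact ⟨0, 0, fun i j => by simp [hS j (hcard ▸ Finset.notMem_empty j)]⟩
  | k + 1, S, B, hB, hS, hcard => by
    by_cases h0 : ∀ i j, B i j = 0
    · exact ⟨0, 0, fun i j => by simp [h0]⟩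
    push Not at h0
    obtain ⟨p, q, hpq⟩ := h0
    have hqp : B q p ≠ 0 := by
      rwa [apply_swap_eq_neg_of_transpose_eq_neg hB p q, neg_ne_zero]
    have hqS : q ∈ S := by_contra fun h => hpq (hS q h p)
    have hpS : p ∈ S := by_contra fun h => hqp (hS p h q)
    have hne : q ≠ p := fun h => hpq (h ▸ diag_eq_zero_of_transpose_eq_neg hK hB q)
    have hS' : ∀ j ∉ (S.erase p).erase q, ∀ i, skewPivot B p q i j = 0 := by
      intro j hj i
      by_cases hjq : j = q
      · exact hjq ▸ skewPivot_apply_right hK hB hpq i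
      by_cases hjp : j = p
      · exact hjp ▸ skewPivot_apply_left hK hB hpq i
      have hjS : j ∉ S := by simpa [hjq, hjp] using hj
      exact skewPivot_apply_of_forall_apply_eq_zero hB (hS j hjS) i
    have hcard' : ((S.erase p).erase q).card ≤ 2 * k := by
      rw [Finset.card_erase_of_mem (Finset.mem_erase.mpr ⟨hne, hqS⟩),
        Finset.card_erase_of_mem hpS]
      omega
    obtain ⟨a, b, hab⟩ := exists_eq_sum_of_transpose_eq_neg hK k _ _ (skewPivot_transpose hB)
      hS' hcard'
    refine ⟨Fin.cons (fun i => B i p / B p q) a, Fin.cons (fun j => B j q) b, fun i j => ?_⟩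
    rw [Fin.sum_univ_succ, eq_skewPivot_add hpq i j, hab, add_comm]
    simp only [Fin.cons_zero, Fin.cons_succ]

end SkewDecomposition

lemma sigma1_transpose : sigma1ᵀ = -sigma1 := by
  ext i j
  fin_cases i <;> fin_cases j <;> simp [sigma1]

lemma symp_transpose (n : ℕ) : (symp n)ᵀ = -symp n := by
  ext ⟨k, s⟩ ⟨l, t⟩
  rw [symp, ← kroneckerMap_transpose, transpose_one, sigma1_transpose]
  simp

lemma mul_symp_mul_transpose_apply {n : ℕ} (X : Mat n) (i j : Idx n) :
    (X * symp n * Xᵀ) i j = ∑ l, (X i (l, 0) * X j (l, 1) - X i (l, 1) * X j (l, 0)) := by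
  simp only [symp, sigma1, Matrix.mul_apply, kroneckerMap_apply, one_apply, of_apply,
    cons_val', cons_val_fin_one, ite_mul, one_mul, zero_mul, mul_ite, mul_zero,
    Fintype.sum_prod_type, Finset.sum_ite_irrel, Fin.sum_univ_two, Fin.isValue, cons_val_zero,
    cons_val_one, Finset.sum_const_zero, Finset.sum_ite_eq', Finset.mem_univ, ↓reduceIte,
    transpose_apply, mul_neg, mul_one, zero_add, neg_mul, add_zero, Finset.sum_add_distrib,
    Finset.sum_neg_distrib, Finset.sum_sub_distrib]
  ring

lemma exists_mul_symp_mul_transpose_eq {n : ℕ} {B : Mat n} (hB : Bᵀ = -B) :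
    ∃ X : Mat n, X * symp n * Xᵀ = B := by
  obtain ⟨a, b, hab⟩ := exists_eq_sum_of_transpose_eq_neg (by simp) n Finset.univ B hB
    (by simp) (by simp [mul_comm])
  refine ⟨of fun i l => ![a l.1 i, b l.1 i] l.2, ?_⟩
  ext i j
  simp [mul_symp_mul_transpose_apply, hab]

section Complexification

variable {m : Type*}

lemma I_smul_toC_add_toC_eq_zero_iff {A Y : Matrix m m ℝ} :
    I • toC A + toC Y = 0 ↔ A = 0 ∧ Y = 0 := by
  simp only [← Matrix.ext_iff, ← forall_and, toC, Matrix.add_apply, Matrix.smul_apply,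
    Matrix.zero_apply, Complex.ext_iff]
  simp [and_comm]

lemma I_smul_toC_map_im_add_toC_map_re (P : Matrix m m ℂ) :
    I • toC (P.map im) + toC (P.map re) = P := by
  ext i j
  simp only [toC, Matrix.add_apply, Matrix.smul_apply, map_apply, smul_eq_mul]
  rw [add_comm, mul_comm, re_add_im]

lemma Matrix.IsHermitian.transpose_map_im {P : Matrix m m ℂ} (hP : P.IsHermitian) :
    (P.map im)ᵀ = -P.map im := by
  ext i j
  simp [← hP.apply i j]

end Complexification

lemma pMap_eq_sub {n : ℕ} (X Y : Mat n) :
    pMap X Y = toC Y - I • toC (symp n - X * symp n * Xᵀ) := by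
  ext i j
  simp only [pMap, toC, Matrix.add_apply, Matrix.sub_apply, Matrix.smul_apply, map_apply,
    smul_eq_mul]
  push_cast
  ring

theorem pMap_properties (n : ℕ) :
    (∀ P : Matrix (Idx n) (Idx n) ℂ, P.PosSemidef →
      ∃ X Y : Mat n, IsGaussian X Y ∧ pMap X Y = P) ∧
    (∀ X Y : Mat n, (pMap X Y).PosSemidef ↔ IsGaussian X Y) ∧
    (∀ X Y : Mat n, pMap X Y = 0 ↔ X * symp n * Xᵀ = symp n ∧ Y = 0) := by
  have posSemidef_pMap_iff (X Y : Mat n) : (pMap X Y).PosSemidef ↔ IsGaussian X Y := by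
    rw [IsGaussian, pMap_eq_sub]
  refine ⟨fun P hP => ?_, posSemidef_pMap_iff, fun X Y => ?_⟩
  · obtain ⟨X, hX⟩ := exists_mul_symp_mul_transpose_eq (B := P.map im + symp n) (by
      rw [transpose_add, hP.isHermitian.transpose_map_im, symp_transpose, neg_add])
    have hXP : pMap X (P.map re) = P := by
      rw [pMap, hX, add_sub_cancel_right, I_smul_toC_map_im_add_toC_map_re]
    exact ⟨X, P.map re, (posSemidef_pMap_iff _ _).mp (by rwa [hXP]), hXP⟩
  · rw [pMap, I_smul_toC_add_toC_eq_zero_iff, sub_eq_zero]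
end
end
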